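/- Let m ≥ 2, let Δ be a flag normal (2m−1)-dimensional pseudomanifold with n vertices, and let σ be a facet of Δ. Suppose that for every face τ ⊆ σ of dimension 2m−4 (i.e., of cardinality 2m−3), the link lk(τ,Δ) is the suspension of a circle, and suppose that ∪_{δ⊆σ, |δ|=2m−2} V(lk(δ,Δ)) = V(Δ). Then Δ is the join of m circles. -/

import Mathlib

open Finset

variable {V : Type*} [DecidableEq V]

/-- A simplicial complex on (a subset of) the vertex type `V`: a collection of
finite sets (the faces) that contains the empty set and is closed under inclusion. -/
def IsComplex (Δ : Finset (Finset V)) : Prop :=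
  ∅ ∈ Δ ∧ ∀ σ ∈ Δ, ∀ τ ⊆ σ, τ ∈ Δ

/-- The vertex set `V(Δ)` of a complex. -/
def verts (Δ : Finset (Finset V)) : Finset V := Δ.sup id

/-- The link `lk(σ,Δ) = {τ ∈ Δ : τ ∩ σ = ∅ ∧ τ ∪ σ ∈ Δ}`. -/
def link (Δ : Finset (Finset V)) (σ : Finset V) : Finset (Finset V) :=
  Δ.filter fun τ => τ ∩ σ = ∅ ∧ τ ∪ σ ∈ Δ

/-- The induced subcomplex `Δ[W] = {σ ∈ Δ : σ ⊆ W}`. -/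
def induced (Δ : Finset (Finset V)) (W : Finset V) : Finset (Finset V) :=
  Δ.filter fun σ => σ ⊆ W

/-- `fNum Δ i` is the number `f_i(Δ)` of `i`-dimensional faces of `Δ`,
i.e. of faces of cardinality `i + 1`. -/
def fNum (Δ : Finset (Finset V)) (i : ℕ) : ℕ :=
  (Δ.filter fun σ => σ.card = i + 1).card

/-- `Δ` is flag: every set of vertices all of whose two-element subsets are
faces of `Δ` is itself a face of `Δ`.  (Taking `u = v` below, this in particular
requires each member of `S` to be a vertex of `Δ`.) -/
def IsFlag (Δ : Finset (Finset V)) : Prop :=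
  ∀ S : Finset V, (∀ u ∈ S, ∀ v ∈ S, ({u, v} : Finset V) ∈ Δ) → S ∈ Δ

/-- A facet: an inclusion-maximal face. -/
def IsFacet (Δ : Finset (Finset V)) (σ : Finset V) : Prop :=
  σ ∈ Δ ∧ ∀ τ ∈ Δ, σ ⊆ τ → τ = σ

/-- A `(d-1)`-dimensional pseudomanifold: a pure `(d-1)`-dimensional complex
(all facets have cardinality `d`) in which every `(d-2)`-dimensional face
(cardinality `d-1`) is contained in exactly two facets (= faces of cardinality `d`). -/
def IsPseudomanifold (Δ : Finset (Finset V)) (d : ℕ) : Prop :=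
  IsComplex Δ ∧ (∀ σ, IsFacet Δ σ → σ.card = d) ∧
    ∀ τ ∈ Δ, τ.card = d - 1 → (Δ.filter fun σ => σ.card = d ∧ τ ⊆ σ).card = 2

/-- The 1-skeleton graph of a complex. -/
def skGraph (Δ : Finset (Finset V)) : SimpleGraph V where
  Adj u v := u ≠ v ∧ ({u, v} : Finset V) ∈ Δ
  symm := ⟨fun u v h => ⟨h.1.symm, by rw [Finset.pair_comm]; exact h.2⟩⟩
  loopless := ⟨fun u h => h.1 rfl⟩

/-- The 1-skeleton graph, restricted to the vertex set of `Δ`, is connected. -/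
def ConnOn (Δ : Finset (Finset V)) : Prop :=
  ((skGraph Δ).induce (verts Δ : Set V)).Connected

/-- A normal `(d-1)`-pseudomanifold: the 1-skeleton is connected and the
1-skeleton of the link of each face of dimension at most `d-3`
(cardinality at most `d-2`) is connected. -/
def IsNormalPseudomanifold (Δ : Finset (Finset V)) (d : ℕ) : Prop :=
  IsPseudomanifold Δ d ∧ ConnOn Δ ∧
    ∀ σ ∈ Δ, σ.card + 2 ≤ d → ConnOn (link Δ σ)

/-- A circle (cycle): a connected 1-dimensional pseudomanifold. -/
def IsCircle (Δ : Finset (Finset V)) : Prop :=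
  IsPseudomanifold Δ 2 ∧ ConnOn Δ

/-- The 0-dimensional complex consisting of two disjoint vertices. -/
def IsTwoPoints (P : Finset (Finset V)) : Prop :=
  ∃ a b : V, a ≠ b ∧ P = {∅, {a}, {b}}

/-- The join of two complexes (on disjoint vertex sets): faces `σ ∪ τ`
with `σ ∈ Δ`, `τ ∈ Γ`. -/
def join (Δ Γ : Finset (Finset V)) : Finset (Finset V) :=
  (Δ ×ˢ Γ).image fun p => p.1 ∪ p.2

/-- `Δ` is the suspension of a circle: the join of a circle with two disjoint points. -/
def IsSuspensionOfCircle (Δ : Finset (Finset V)) : Prop :=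
  ∃ C P, IsCircle C ∧ IsTwoPoints P ∧ Disjoint (verts C) (verts P) ∧ Δ = join C P

/-- Iterated join of a family of complexes. -/
def joinFam : (m : ℕ) → (Fin m → Finset (Finset V)) → Finset (Finset V)
  | 0, _ => {∅}
  | m + 1, C => join (C 0) (joinFam m fun i => C i.succ)

/-- `Δ` is the join of `m` circles (on pairwise disjoint vertex sets). -/
def IsJoinOfCircles (Δ : Finset (Finset V)) (m : ℕ) : Prop :=
  ∃ C : Fin m → Finset (Finset V), (∀ i, IsCircle (C i)) ∧
    (∀ i j, i ≠ j → Disjoint (verts (C i)) (verts (C j))) ∧ Δ = joinFam m C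

/-- `a_k = Σ_{τ ⊆ σ, |τ| = k} f₀(lk(τ,Δ))`. -/
def aNum (Δ : Finset (Finset V)) (σ : Finset V) (k : ℕ) : ℕ :=
  ∑ τ ∈ σ.powersetCard k, fNum (link Δ τ) 0

/-- `W_τ`: the vertices `w` of `lk(τ,Δ)` with `{w,u} ∉ Δ` for every `u ∈ σ \ τ`. -/
def Wset (Δ : Finset (Finset V)) (σ τ : Finset V) : Finset V :=
  (verts (link Δ τ)).filter fun w => ∀ u ∈ σ \ τ, ({w, u} : Finset V) ∉ Δ

/-- `b_k = Σ_{τ ⊆ σ, |τ| = k} |W_τ|`. -/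
def bNum (Δ : Finset (Finset V)) (σ : Finset V) (k : ℕ) : ℕ :=
  ∑ τ ∈ σ.powersetCard k, (Wset Δ σ τ).card

/-- The Euler characteristic `χ(Δ) = Σ_{i ≥ 0} (-1)^i f_i(Δ)`, computed as a sum
of `(-1)^{|σ|-1}` over the nonempty faces `σ`. -/
def eulerChar (Δ : Finset (Finset V)) : ℤ :=
  ∑ σ ∈ Δ.filter (fun σ => σ ≠ ∅), (-1 : ℤ) ^ (σ.card - 1)

/-- `Δ` is Eulerian: for every face `σ` (including `σ = ∅`, whose link is `Δ`),
`χ(lk(σ,Δ)) = 1 + (-1)^{dim lk(σ,Δ)}`; since `dim lk(σ,Δ)` is one less than the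
maximal cardinality of a face of the link, this equals `1 - (-1)^{max card}`. -/
def IsEulerian (Δ : Finset (Finset V)) : Prop :=
  ∀ σ ∈ Δ, eulerChar (link Δ σ) = 1 - (-1) ^ ((link Δ σ).sup Finset.card)

/-!
For a vertex `x` let `D(x) ⊆ σ` be the set of vertices of `σ` not adjacent to `x`. Since `Δ` is
flag and `σ` is a facet, `D(x)` is nonempty, and the covering hypothesis gives `|D(x)| ≤ 2`.
Two distinct two-element sets `D(x)`, `D(y)` cannot meet: in the link of the other `2m - 3`
vertices of `σ`, a suspension of a circle, their union would be either a triangle on the circle or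
three vertices off it. So these sets extend to a partition of `σ` into `m` pairs `p`, and
`lk(σ \ p)` is a circle whose vertices are exactly the `x` with `D(x) ⊆ p`; these circles
partition the vertices of `Δ`. For `p ≠ q` and an edge `e` of `lk(σ \ q)`, the link of
`e ∪ σ \ (p ∪ q)` is a circle contained in `lk(σ \ p)`, hence equal to it, so every vertex of
`lk(σ \ p)` is adjacent to every vertex of `lk(σ \ q)`. As `Δ` is flag, it is the join of the
circles.
-/

theorem mem_verts {Δ : Finset (Finset V)} {x : V} : x ∈ verts Δ ↔ ∃ γ ∈ Δ, x ∈ γ := by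
  simp [verts]

theorem subset_verts {Δ : Finset (Finset V)} {γ : Finset V} (h : γ ∈ Δ) : γ ⊆ verts Δ :=
  fun _ hx => mem_verts.2 ⟨γ, h, hx⟩

theorem verts_mono {Δ Γ : Finset (Finset V)} (h : Δ ⊆ Γ) : verts Δ ⊆ verts Γ :=
  fun _ hx => by
    obtain ⟨γ, hγ, hxγ⟩ := mem_verts.1 hx
    exact mem_verts.2 ⟨γ, h hγ, hxγ⟩

theorem singleton_mem_of_mem_verts {Δ : Finset (Finset V)} (hC : IsComplex Δ) {x : V}
    (hx : x ∈ verts Δ) : {x} ∈ Δ := by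
  obtain ⟨γ, hγ, hxγ⟩ := mem_verts.1 hx
  exact hC.2 γ hγ {x} (singleton_subset_iff.2 hxγ)

theorem mem_link {Δ : Finset (Finset V)} {ρ γ : Finset V} :
    γ ∈ link Δ ρ ↔ γ ∈ Δ ∧ Disjoint γ ρ ∧ γ ∪ ρ ∈ Δ := by
  simp [link, disjoint_iff_inter_eq_empty]

theorem sdiff_mem_link {Δ : Finset (Finset V)} (hC : IsComplex Δ) {F ρ : Finset V} (hF : F ∈ Δ)
    (hρ : ρ ⊆ F) : F \ ρ ∈ link Δ ρ :=
  mem_link.2 ⟨hC.2 F hF _ sdiff_subset, sdiff_disjoint, by rwa [sdiff_union_of_subset hρ]⟩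

theorem isComplex_link {Δ : Finset (Finset V)} (hC : IsComplex Δ) {ρ : Finset V} (hρ : ρ ∈ Δ) :
    IsComplex (link Δ ρ) := by
  refine ⟨mem_link.2 ⟨hC.1, disjoint_empty_left ρ, by simpa using hρ⟩, fun γ hγ τ hτ => ?_⟩
  obtain ⟨hγΔ, hdisj, hun⟩ := mem_link.1 hγ
  exact mem_link.2 ⟨hC.2 γ hγΔ τ hτ, hdisj.mono_left hτ,
    hC.2 _ hun _ (union_subset_union hτ le_rfl)⟩

theorem exists_isFacet_superset {Δ : Finset (Finset V)} {γ : Finset V} (h : γ ∈ Δ) :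
    ∃ F, IsFacet Δ F ∧ γ ⊆ F := by
  obtain ⟨F, hF, hmax⟩ := (Δ.filter (γ ⊆ ·)).exists_max_image card ⟨γ, mem_filter.2 ⟨h, le_rfl⟩⟩
  rw [mem_filter] at hF
  refine ⟨F, ⟨hF.1, fun τ hτ hFτ => ?_⟩, hF.2⟩
  exact (eq_of_subset_of_card_le hFτ (hmax τ (mem_filter.2 ⟨hτ, hF.2.trans hFτ⟩))).symm

namespace IsPseudomanifold

variable {Δ : Finset (Finset V)} {d : ℕ}

theorem exists_card_eq_superset (hPM : IsPseudomanifold Δ d) {γ : Finset V} (h : γ ∈ Δ) :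
    ∃ F ∈ Δ, γ ⊆ F ∧ F.card = d := by
  obtain ⟨F, hF, hγF⟩ := exists_isFacet_superset h
  exact ⟨F, hF.1, hγF, hPM.2.1 F hF⟩

theorem card_le (hPM : IsPseudomanifold Δ d) {γ : Finset V} (h : γ ∈ Δ) : γ.card ≤ d := by
  obtain ⟨F, -, hγF, rfl⟩ := hPM.exists_card_eq_superset h
  exact card_le_card hγF

theorem link (hPM : IsPseudomanifold Δ d) {ρ : Finset V} (hρ : ρ ∈ Δ) (hρd : ρ.card < d) :
    IsPseudomanifold (link Δ ρ) (d - ρ.card) := by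
  have hC := hPM.1
  have hcard : ∀ γ ∈ _root_.link Δ ρ, (γ ∪ ρ).card = γ.card + ρ.card :=
    fun γ hγ => card_union_of_disjoint (mem_link.1 hγ).2.1
  refine ⟨isComplex_link hC hρ, fun γ hγ => ?_, fun τ hτ hτcard => ?_⟩
  · obtain ⟨hγΔ, hγρ, hγρΔ⟩ := mem_link.1 hγ.1
    obtain ⟨F, hF, hγF, hFcard⟩ := hPM.exists_card_eq_superset hγρΔ
    have hρF : ρ ⊆ F := subset_union_right.trans hγF
    have hγF' : γ ⊆ F \ ρ := fun x hx =>
      mem_sdiff.2 ⟨hγF (mem_union_left ρ hx), disjoint_left.1 hγρ hx⟩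
    rw [← hγ.2 _ (sdiff_mem_link hC hF hρF) hγF', card_sdiff_of_subset hρF, hFcard]
  · obtain ⟨-, hτρ, hτρΔ⟩ := mem_link.1 hτ
    rw [← hPM.2.2 (τ ∪ ρ) hτρΔ (by rw [hcard τ hτ]; omega)]
    apply card_nbij' (· ∪ ρ) (· \ ρ)
    · intro γ hγ
      simp only [mem_coe, mem_filter] at hγ ⊢
      exact ⟨(mem_link.1 hγ.1).2.2, by rw [hcard γ hγ.1]; omega,
        union_subset_union hγ.2.2 le_rfl⟩
    · intro F hF
      simp only [mem_coe, mem_filter] at hF ⊢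
      have hρF : ρ ⊆ F := subset_union_right.trans hF.2.2
      refine ⟨sdiff_mem_link hC hF.1 hρF, by rw [card_sdiff_of_subset hρF, hF.2.1], fun x hx => ?_⟩
      exact mem_sdiff.2 ⟨hF.2.2 (mem_union_left ρ hx), disjoint_left.1 hτρ hx⟩
    · intro γ hγ
      simp only [mem_coe, mem_filter] at hγ
      exact union_sdiff_cancel_right (mem_link.1 hγ.1).2.1
    · intro F hF
      simp only [mem_coe, mem_filter] at hF
      exact sdiff_union_of_subset (subset_union_right.trans hF.2.2)

end IsPseudomanifold

theorem IsNormalPseudomanifold.isCircle_link {Δ : Finset (Finset V)} {d : ℕ}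
    (hN : IsNormalPseudomanifold Δ d) {ρ : Finset V} (hρ : ρ ∈ Δ) (hρd : ρ.card + 2 = d) :
    IsCircle (link Δ ρ) :=
  ⟨(show d - ρ.card = 2 by omega) ▸ hN.1.link hρ (by omega), hN.2.2 ρ hρ hρd.le⟩

theorem ConnOn.verts_subset {Z : Finset (Finset V)} (hZ : ConnOn Z) {W : Finset V}
    (hW : (W ∩ verts Z).Nonempty) (hcl : ∀ u ∈ W, ∀ v, (skGraph Z).Adj u v → v ∈ W) :
    verts Z ⊆ W := by
  obtain ⟨x, hx⟩ := hW
  rw [mem_inter] at hx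
  suffices ∀ b, Relation.ReflTransGen ((skGraph Z).induce (verts Z : Set V)).Adj ⟨x, hx.2⟩ b →
      (b : V) ∈ W from
    fun y hy => this ⟨y, hy⟩ ((SimpleGraph.reachable_iff_reflTransGen _ _).1
      (SimpleGraph.Connected.preconnected hZ _ _))
  intro b hb
  induction hb with
  | refl => exact hx.1
  | tail _ hadj ih => exact hcl _ ih _ hadj

namespace IsCircle

variable {Z : Finset (Finset V)}

theorem exists_edge (hZ : IsCircle Z) {x : V} (hx : x ∈ verts Z) :
    ∃ e ∈ Z, e.card = 2 ∧ x ∈ e := by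
  obtain ⟨γ, hγ, hxγ⟩ := mem_verts.1 hx
  obtain ⟨e, he, hγe, he2⟩ := hZ.1.exists_card_eq_superset hγ
  exact ⟨e, he, he2, hγe hxγ⟩

theorem verts_nonempty (hZ : IsCircle Z) : (verts Z).Nonempty := by
  obtain ⟨e, he, -, he2⟩ := hZ.1.exists_card_eq_superset hZ.1.1.1
  obtain ⟨x, hx⟩ := card_pos.1 (he2 ▸ two_pos : 0 < e.card)
  exact ⟨x, subset_verts he hx⟩

/-- Each vertex of a circle lies on exactly two edges, so the vertex set of a subcircle is closed
under the edges of the ambient circle. -/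
theorem verts_eq_of_subset {W : Finset (Finset V)} (hW : IsCircle W) (hZ : IsCircle Z)
    (hWZ : W ⊆ Z) : verts W = verts Z := by
  have edges_at : ∀ {Y : Finset (Finset V)}, IsCircle Y → ∀ w ∈ verts Y,
      (Y.filter fun e => e.card = 2 ∧ {w} ⊆ e).card = 2 :=
    fun hY w hw => hY.1.2.2 {w} (singleton_mem_of_mem_verts hY.1.1 hw) (card_singleton w)
  have edges_eq : ∀ w ∈ verts W, W.filter (fun e => e.card = 2 ∧ {w} ⊆ e) =
      Z.filter (fun e => e.card = 2 ∧ {w} ⊆ e) := fun w hw =>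
    eq_of_subset_of_card_le (filter_subset_filter _ hWZ)
      (by rw [edges_at hW w hw, edges_at hZ w (verts_mono hWZ hw)])
  refine (verts_mono hWZ).antisymm (hZ.2.verts_subset ?_ fun u hu v huv => ?_)
  · obtain ⟨w, hw⟩ := hW.verts_nonempty
    exact ⟨w, mem_inter.2 ⟨hw, verts_mono hWZ hw⟩⟩
  · have : {u, v} ∈ W.filter fun e => e.card = 2 ∧ {u} ⊆ e := by
      rw [edges_eq u hu]
      simp [huv.2, card_pair huv.1]
    exact subset_verts (mem_filter.1 this).1 (by simp)

end IsCircle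

theorem isClique_of_mem {Δ : Finset (Finset V)} (hC : IsComplex Δ) {γ : Finset V} (h : γ ∈ Δ) :
    (skGraph Δ).IsClique (γ : Set V) :=
  fun _ hx _ hy hxy => ⟨hxy, hC.2 γ h _ (insert_subset hx (singleton_subset_iff.2 hy))⟩

namespace IsFlag

variable {Δ : Finset (Finset V)}

theorem mem_of_isClique (hF : IsFlag Δ) (hC : IsComplex Δ) {S : Finset V} (hS : S ⊆ verts Δ)
    (h : (skGraph Δ).IsClique (S : Set V)) : S ∈ Δ :=
  hF S fun u hu v hv => by
    by_cases huv : u = v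
    · simpa [huv] using singleton_mem_of_mem_verts hC (hS (huv ▸ hv))
    · exact (h hu hv huv).2

theorem mem_verts_link (hF : IsFlag Δ) (hC : IsComplex Δ) {ρ : Finset V} (hρ : ρ ∈ Δ) {x : V} :
    x ∈ verts (link Δ ρ) ↔ x ∈ verts Δ ∧ ∀ u ∈ ρ, (skGraph Δ).Adj x u := by
  constructor
  · intro hx
    obtain ⟨γ, hγ, hxγ⟩ := mem_verts.1 hx
    obtain ⟨hγΔ, hγρ, hγρΔ⟩ := mem_link.1 hγ
    exact ⟨subset_verts hγΔ hxγ, fun u hu => isClique_of_mem hC hγρΔ (mem_union_left ρ hxγ)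
      (mem_union_right γ hu) fun h => disjoint_left.1 hγρ hxγ (h ▸ hu)⟩
  · rintro ⟨hx, hadj⟩
    have hins : {x} ∪ ρ ∈ Δ := by
      rw [← insert_eq]
      refine hF.mem_of_isClique hC (insert_subset hx (subset_verts hρ)) ?_
      rw [coe_insert]
      exact SimpleGraph.isClique_insert.2 ⟨isClique_of_mem hC hρ, fun u hu _ => hadj u hu⟩
    have hxρ : Disjoint {x} ρ := disjoint_singleton_left.2 fun h => (hadj x h).1 rfl
    exact subset_verts (mem_link.2 ⟨hC.2 _ hins _ subset_union_left, hxρ, hins⟩)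
      (mem_singleton_self x)

theorem link_eq_induced (hF : IsFlag Δ) (hC : IsComplex Δ) {ρ : Finset V} (hρ : ρ ∈ Δ) :
    link Δ ρ = induced Δ (verts (link Δ ρ)) := by
  ext γ
  simp only [induced, mem_filter]
  refine ⟨fun h => ⟨(mem_link.1 h).1, subset_verts h⟩, fun ⟨hγ, hγW⟩ => ?_⟩
  have hadj : ∀ x ∈ γ, ∀ u ∈ ρ, (skGraph Δ).Adj x u :=
    fun x hx => ((hF.mem_verts_link hC hρ).1 (hγW hx)).2
  refine mem_link.2 ⟨hγ, disjoint_left.2 fun x hx hxρ => (hadj x hx x hxρ).1 rfl,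
    hF.mem_of_isClique hC (union_subset (subset_verts hγ) (subset_verts hρ)) ?_⟩
  rw [coe_union]
  exact Set.pairwise_union.2 ⟨isClique_of_mem hC hγ, isClique_of_mem hC hρ,
    fun x hx u hu _ => ⟨hadj x hx u hu, (hadj x hx u hu).symm⟩⟩

end IsFlag

theorem mem_join {A B : Finset (Finset V)} {γ : Finset V} :
    γ ∈ join A B ↔ ∃ a ∈ A, ∃ b ∈ B, a ∪ b = γ := by
  simp [join, and_assoc]

theorem mem_joinFam {k : ℕ} {C : Fin k → Finset (Finset V)} {γ : Finset V} :
    γ ∈ joinFam k C ↔ ∃ f : Fin k → Finset V, (∀ i, f i ∈ C i) ∧ univ.sup f = γ := by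
  induction k generalizing γ with
  | zero => simp [joinFam, eq_comm]
  | succ k ih =>
    simp only [joinFam, mem_join, ih, Fin.univ_succ, sup_cons, sup_map, sup_eq_union]
    constructor
    · rintro ⟨a, ha, _, ⟨g, hg, rfl⟩, rfl⟩
      exact ⟨Fin.cons a g, Fin.cases ha hg, by simp [Function.comp_def]⟩
    · rintro ⟨f, hf, rfl⟩
      exact ⟨f 0, hf 0, _, ⟨_, fun i => hf i.succ, rfl⟩, by simp [Function.comp_def]⟩

theorem IsFlag.eq_joinFam_induced {Δ : Finset (Finset V)} (hF : IsFlag Δ) (hC : IsComplex Δ)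
    {k : ℕ} (B : Fin k → Finset V) (hcover : verts Δ ⊆ univ.sup B)
    (hadj : ∀ i j, i ≠ j → ∀ u ∈ B i, ∀ v ∈ B j, {u, v} ∈ Δ) :
    Δ = joinFam k fun i => induced Δ (B i) := by
  ext γ
  rw [mem_joinFam]
  constructor
  · intro hγ
    refine ⟨fun i => γ ∩ B i, fun i => mem_filter.2 ⟨hC.2 γ hγ _ inter_subset_left,
      inter_subset_right⟩, ?_⟩
    ext x
    have := @hcover x
    simp only [mem_sup, mem_univ, true_and, mem_inter] at this ⊢
    exact ⟨fun ⟨_, hx, _⟩ => hx, fun hx => (this (subset_verts hγ hx)).imp fun _ => And.intro hx⟩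
  · rintro ⟨f, hf, rfl⟩
    simp only [induced, mem_filter] at hf
    refine hF.mem_of_isClique hC (Finset.sup_le fun i _ => subset_verts (hf i).1) ?_
    intro u hu v hv huv
    obtain ⟨i, -, hui⟩ := mem_sup.1 hu
    obtain ⟨j, -, hvj⟩ := mem_sup.1 hv
    by_cases hij : i = j
    · subst hij
      exact isClique_of_mem hC (hf i).1 hui hvj huv
    · exact ⟨huv, hadj i j hij u ((hf i).2 hui) v ((hf j).2 hvj)⟩

/-- `K` is the vertex set of the circle; the two apexes are the vertices outside it. -/
theorem IsSuspensionOfCircle.exists_equator {L : Finset (Finset V)} (h : IsSuspensionOfCircle L) :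
    ∃ K : Finset V, (verts L \ K).card ≤ 2 ∧ (∀ γ ∈ L, γ ⊆ K → γ.card ≤ 2) ∧
      ∀ x ∈ verts L, ∀ y ∈ verts L, ¬(skGraph L).Adj x y → (x ∈ K ↔ y ∈ K) := by
  obtain ⟨C, P, hCc, ⟨a, b, -, rfl⟩, hdisj, rfl⟩ := h
  have hP : verts ({∅, {a}, {b}} : Finset (Finset V)) = {a, b} := by ext; simp [verts]
  have hverts : verts (join C {∅, {a}, {b}}) ⊆ verts C ∪ {a, b} := fun x hx => by
    obtain ⟨γ, hγ, hxγ⟩ := mem_verts.1 hx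
    obtain ⟨s, hs, t, ht, rfl⟩ := mem_join.1 hγ
    exact (union_subset_union (subset_verts hs) (hP ▸ subset_verts ht)) hxγ
  have hadj : ∀ x ∈ verts C, ∀ y ∈ verts (join C {∅, {a}, {b}}), y ∉ verts C →
      (skGraph (join C {∅, {a}, {b}})).Adj x y := fun x hx y hy hyC => by
    have hy' : y = a ∨ y = b := by simpa [hyC] using hverts hy
    refine ⟨fun h => hyC (h ▸ hx), mem_join.2 ⟨{x}, singleton_mem_of_mem_verts hCc.1.1 hx, {y},
      by rcases hy' with rfl | rfl <;> simp, rfl⟩⟩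
  refine ⟨verts C, ?_, fun γ hγ hγC => ?_, fun x hx y hy hxy => ?_⟩
  · calc (verts (join C {∅, {a}, {b}}) \ verts C).card ≤ ({a, b} : Finset V).card :=
          card_le_card fun x hx => by simpa [(mem_sdiff.1 hx).2] using hverts (mem_sdiff.1 hx).1
      _ ≤ 2 := card_le_two
  · obtain ⟨s, hs, t, ht, rfl⟩ := mem_join.1 hγ
    have ht' : t = ∅ :=
      disjoint_self.1 (hdisj.mono (subset_union_right.trans hγC) (subset_verts ht))
    rw [ht', union_empty]
    exact hCc.1.card_le hs
  · by_cases hxC : x ∈ verts C <;> by_cases hyC : y ∈ verts C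
    all_goals simp only [hxC, hyC]
    · exact absurd (hadj x hxC y hy hyC) hxy
    · exact absurd (hadj y hyC x hx hxC).symm hxy

def IsPairing (N : Finset (Finset V)) (σ : Finset V) : Prop :=
  (∀ p ∈ N, p.card = 2) ∧ (N : Set (Finset V)).PairwiseDisjoint id ∧ N.biUnion id = σ

theorem card_biUnion_of_card_eq_two {N : Finset (Finset V)} (h2 : ∀ p ∈ N, p.card = 2)
    (hN : (N : Set (Finset V)).PairwiseDisjoint id) : (N.biUnion id).card = 2 * N.card := by
  rw [card_biUnion hN]
  exact (sum_const_nat h2).trans (mul_comm _ _)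

namespace IsPairing

variable {N : Finset (Finset V)} {σ : Finset V}

theorem subset (hN : IsPairing N σ) {p : Finset V} (hp : p ∈ N) : p ⊆ σ :=
  hN.2.2 ▸ subset_biUnion_of_mem id hp

theorem eq_of_mem (hN : IsPairing N σ) {p q : Finset V} (hp : p ∈ N) (hq : q ∈ N) {a : V}
    (hap : a ∈ p) (haq : a ∈ q) : p = q := by
  by_contra hpq
  exact disjoint_left.1 (hN.2.1 hp hq hpq) hap haq

theorem card_sdiff_add_two (hN : IsPairing N σ) {p : Finset V} (hp : p ∈ N) :
    (σ \ p).card + 2 = σ.card := by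
  have h := card_le_card (hN.subset hp)
  rw [hN.1 p hp] at h
  rw [card_sdiff_of_subset (hN.subset hp), hN.1 p hp]
  omega

theorem two_mul_card (hN : IsPairing N σ) : 2 * N.card = σ.card := by
  rw [← card_biUnion_of_card_eq_two hN.1 hN.2.1, hN.2.2]

end IsPairing

theorem exists_isPairing_superset (n : ℕ) {σ : Finset V} {M : Finset (Finset V)}
    (hn : (σ \ M.biUnion id).card = 2 * n) (h2 : ∀ p ∈ M, p.card = 2)
    (hdisj : (M : Set (Finset V)).PairwiseDisjoint id) (hMσ : M.biUnion id ⊆ σ) :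
    ∃ N, M ⊆ N ∧ IsPairing N σ := by
  induction n generalizing M with
  | zero =>
    exact ⟨M, subset_rfl, h2, hdisj,
      hMσ.antisymm (sdiff_eq_empty_iff_subset.1 (card_eq_zero.1 hn))⟩
  | succ n ih =>
    obtain ⟨x, hx, y, hy, hxy⟩ := one_lt_card.1 (by omega : 1 < (σ \ M.biUnion id).card)
    have hxyσ : {x, y} ⊆ σ \ M.biUnion id := insert_subset hx (singleton_subset_iff.2 hy)
    have hn' : (σ \ (insert {x, y} M).biUnion id).card = 2 * n := by
      rw [biUnion_insert, id, union_comm, ← sup_eq_union, ← sdiff_sdiff_left,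
        card_sdiff_of_subset hxyσ, hn, card_pair hxy]
      omega
    have h2' : ∀ p ∈ insert {x, y} M, p.card = 2 := forall_mem_insert _ _ _ |>.2 ⟨card_pair hxy, h2⟩
    have hdisj' : ((insert {x, y} M : Finset (Finset V)) : Set (Finset V)).PairwiseDisjoint id := by
      rw [coe_insert]
      refine hdisj.insert fun p hp _ => disjoint_of_subset_left hxyσ ?_
      exact disjoint_sdiff_self_left.mono_right (subset_biUnion_of_mem id hp)
    have hMσ' : (insert {x, y} M).biUnion id ⊆ σ := by
      rw [biUnion_insert]
      exact union_subset (hxyσ.trans sdiff_subset) hMσ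
    obtain ⟨N, hMN, hN⟩ := ih hn' h2' hdisj' hMσ'
    exact ⟨N, (subset_insert _ M).trans hMN, hN⟩

open Classical in
/-- When `x ∈ σ` this contains `x` itself, as `skGraph Δ` has no loops. -/
noncomputable def nonNeighbors (Δ : Finset (Finset V)) (σ : Finset V) (x : V) : Finset V :=
  σ.filter fun u => ¬(skGraph Δ).Adj x u

section NonNeighbors

variable {Δ : Finset (Finset V)} {σ : Finset V} {x : V}

theorem mem_nonNeighbors {u : V} : u ∈ nonNeighbors Δ σ x ↔ u ∈ σ ∧ ¬(skGraph Δ).Adj x u := by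
  simp [nonNeighbors]

theorem nonNeighbors_subset : nonNeighbors Δ σ x ⊆ σ := fun _ h => (mem_nonNeighbors.1 h).1

theorem mem_verts_link_sdiff (hF : IsFlag Δ) (hC : IsComplex Δ) (hσ : σ ∈ Δ) (p : Finset V) :
    x ∈ verts (link Δ (σ \ p)) ↔ x ∈ verts Δ ∧ nonNeighbors Δ σ x ⊆ p := by
  rw [hF.mem_verts_link hC (hC.2 σ hσ _ sdiff_subset)]
  simp only [subset_iff, mem_nonNeighbors, mem_sdiff, and_imp]
  exact and_congr_right fun _ => forall_congr' fun _ => forall_congr' fun _ => not_imp_comm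

theorem card_nonNeighbors_add_card_le (hF : IsFlag Δ) (hC : IsComplex Δ) (hσ : σ ∈ Δ)
    {δ : Finset V} (hδσ : δ ⊆ σ) (hx : x ∈ verts (link Δ δ)) :
    (nonNeighbors Δ σ x).card + δ.card ≤ σ.card := by
  have hsub := ((mem_verts_link_sdiff hF hC hσ (σ \ δ)).1
    (by rwa [Finset.sdiff_sdiff_eq_self hδσ])).2
  have := card_le_card hsub
  rw [card_sdiff_of_subset hδσ] at this
  have := card_le_card hδσ
  omega

theorem IsFacet.verts_link_eq_empty (hσ : IsFacet Δ σ) : verts (link Δ σ) = ∅ :=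
  eq_empty_of_forall_notMem fun x hx => by
    obtain ⟨γ, hγ, hxγ⟩ := mem_verts.1 hx
    obtain ⟨-, hγσ, hγσΔ⟩ := mem_link.1 hγ
    have hxσ : x ∈ σ := hσ.2 _ hγσΔ subset_union_right ▸ mem_union_left σ hxγ
    exact disjoint_left.1 hγσ hxγ hxσ

theorem nonNeighbors_nonempty (hF : IsFlag Δ) (hC : IsComplex Δ) (hσ : IsFacet Δ σ)
    (hx : x ∈ verts Δ) : (nonNeighbors Δ σ x).Nonempty := by
  rw [nonempty_iff_ne_empty]
  intro h
  have := (mem_verts_link_sdiff hF hC hσ.1 ∅).2 ⟨hx, h.subset⟩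
  rw [sdiff_empty, hσ.verts_link_eq_empty] at this
  exact notMem_empty x this

theorem disjoint_nonNeighbors (hF : IsFlag Δ) (hC : IsComplex Δ) (hσ : σ ∈ Δ)
    (hsusp : ∀ τ ⊆ σ, τ.card + 3 = σ.card → IsSuspensionOfCircle (link Δ τ)) {y : V}
    (hx : x ∈ verts Δ) (hy : y ∈ verts Δ) (hx2 : (nonNeighbors Δ σ x).card = 2)
    (hy2 : (nonNeighbors Δ σ y).card = 2) (hxy : nonNeighbors Δ σ x ≠ nonNeighbors Δ σ y) :
    Disjoint (nonNeighbors Δ σ x) (nonNeighbors Δ σ y) := by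
  set A := nonNeighbors Δ σ x
  set B := nonNeighbors Δ σ y
  by_contra hAB
  obtain ⟨u, hu⟩ := not_disjoint_iff_nonempty_inter.1 hAB
  have hABσ : A ∪ B ⊆ σ := union_subset nonNeighbors_subset nonNeighbors_subset
  have hAB3 : (A ∪ B).card = 3 := by
    have hBA : ¬B ⊆ A := fun h => hxy (eq_of_subset_of_card_le h (by omega)).symm
    have h1 := card_lt_card (ssubset_of_subset_of_ne subset_union_left
      fun h => hBA (subset_union_right.trans h.symm.subset))
    have h2 := card_union_add_card_inter A B
    have h3 := card_pos.2 ⟨u, hu⟩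
    omega
  set τ := σ \ (A ∪ B)
  have hτ : τ.card + 3 = σ.card := by
    have := card_le_card hABσ
    rw [card_sdiff_of_subset hABσ]
    omega
  obtain ⟨K, hK, hKface, hKadj⟩ := (hsusp τ sdiff_subset hτ).exists_equator
  have hABL : A ∪ B ∈ link Δ τ := by
    simpa only [τ, Finset.sdiff_sdiff_eq_self hABσ] using
      sdiff_mem_link hC hσ (sdiff_subset : τ ⊆ σ)
  have hxL := (mem_verts_link_sdiff hF hC hσ (A ∪ B)).2 ⟨hx, subset_union_left⟩
  have hyL := (mem_verts_link_sdiff hF hC hσ (A ∪ B)).2 ⟨hy, subset_union_right⟩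
  have same_side : ∀ z ∈ verts (link Δ τ), ∀ a ∈ nonNeighbors Δ σ z, a ∈ A ∪ B →
      (z ∈ K ↔ a ∈ K) := fun z hz a ha haAB =>
    hKadj z hz a (subset_verts hABL haAB) fun h =>
      (mem_nonNeighbors.1 ha).2 ⟨h.1, (mem_link.1 h.2).1⟩
  have hside : ∀ a ∈ A ∪ B, (a ∈ K ↔ u ∈ K) := by
    intro a ha
    rcases mem_union.1 ha with ha | ha
    · rw [← same_side x hxL a ha (subset_union_left ha),
        same_side x hxL u (mem_inter.1 hu).1 (subset_union_left (mem_inter.1 hu).1)]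
    · rw [← same_side y hyL a ha (subset_union_right ha),
        same_side y hyL u (mem_inter.1 hu).2 (subset_union_right (mem_inter.1 hu).2)]
  by_cases huK : u ∈ K
  · have := hKface _ hABL fun a ha => (hside a ha).2 huK
    omega
  · have := card_le_card fun a (ha : a ∈ A ∪ B) =>
      mem_sdiff.2 ⟨subset_verts hABL ha, fun h => huK ((hside a ha).1 h)⟩
    omega

end NonNeighbors

section Blocks

variable {Δ : Finset (Finset V)} {σ : Finset V}

theorem exists_isPairing_nonNeighbors_subset (hF : IsFlag Δ) (hC : IsComplex Δ)
    (hσ : IsFacet Δ σ) {m : ℕ} (hσm : σ.card = 2 * m)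
    (hsusp : ∀ τ ⊆ σ, τ.card + 3 = σ.card → IsSuspensionOfCircle (link Δ τ))
    (hle : ∀ x ∈ verts Δ, (nonNeighbors Δ σ x).card ≤ 2) :
    ∃ N, IsPairing N σ ∧ ∀ x ∈ verts Δ, ∃ p ∈ N, nonNeighbors Δ σ x ⊆ p := by
  set M := ((verts Δ).filter fun x => (nonNeighbors Δ σ x).card = 2).image (nonNeighbors Δ σ)
  have hM2 : ∀ p ∈ M, p.card = 2 := by
    simp only [M, forall_mem_image, mem_filter]
    exact fun _ hx => hx.2
  have hMdisj : (M : Set (Finset V)).PairwiseDisjoint id := by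
    simp only [M, coe_image]
    rintro _ ⟨x, hx, rfl⟩ _ ⟨y, hy, rfl⟩ hxy
    rw [mem_coe, mem_filter] at hx hy
    exact disjoint_nonNeighbors hF hC hσ.1 hsusp hx.1 hy.1 hx.2 hy.2 hxy
  have hMσ : M.biUnion id ⊆ σ := by
    simp only [M, biUnion_subset, forall_mem_image]
    exact fun _ _ => nonNeighbors_subset
  obtain ⟨N, hMN, hN⟩ := exists_isPairing_superset (m - M.card)
    (by rw [card_sdiff_of_subset hMσ, card_biUnion_of_card_eq_two hM2 hMdisj, hσm, Nat.mul_sub])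
    hM2 hMdisj hMσ
  refine ⟨N, hN, fun x hx => ?_⟩
  have hpos := card_pos.2 (nonNeighbors_nonempty hF hC hσ hx)
  by_cases h2 : (nonNeighbors Δ σ x).card = 2
  · exact ⟨_, hMN (mem_image_of_mem _ (mem_filter.2 ⟨hx, h2⟩)), subset_rfl⟩
  · have h1 : (nonNeighbors Δ σ x).card = 1 := by
      have := hle x hx
      omega
    obtain ⟨a, ha⟩ := card_eq_one.1 h1
    have haσ : a ∈ N.biUnion id := hN.2.2 ▸ nonNeighbors_subset (ha ▸ mem_singleton_self a)
    obtain ⟨p, hp, hap⟩ := mem_biUnion.1 haσ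
    exact ⟨p, hp, ha ▸ singleton_subset_iff.2 hap⟩

variable {N : Finset (Finset V)}

theorem disjoint_verts_link_sdiff (hF : IsFlag Δ) (hC : IsComplex Δ) (hσ : IsFacet Δ σ)
    (hN : IsPairing N σ) {p q : Finset V} (hp : p ∈ N) (hq : q ∈ N) (hpq : p ≠ q) :
    Disjoint (verts (link Δ (σ \ p))) (verts (link Δ (σ \ q))) := by
  refine disjoint_left.2 fun x hxp hxq => hpq ?_
  obtain ⟨hx, hxp⟩ := (mem_verts_link_sdiff hF hC hσ.1 p).1 hxp
  obtain ⟨a, ha⟩ := nonNeighbors_nonempty hF hC hσ hx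
  exact hN.eq_of_mem hp hq (hxp ha) (((mem_verts_link_sdiff hF hC hσ.1 q).1 hxq).2 ha)

/-- `w` cannot lie on the circle `lk(σ \ q)`: together with `e` it would span a triangle there. -/
theorem mem_verts_link_sdiff_of_adj (hF : IsFlag Δ) (hC : IsComplex Δ) (hσ : IsFacet Δ σ)
    (hN : IsPairing N σ) (hblock : ∀ x ∈ verts Δ, ∃ p ∈ N, nonNeighbors Δ σ x ⊆ p)
    {p q e : Finset V} (hp : p ∈ N) (hq : q ∈ N)
    (hZ : IsCircle (link Δ (σ \ q))) (he : e ∈ link Δ (σ \ q)) (he2 : e.card = 2) {w : V}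
    (hw : w ∈ verts Δ) (hwpq : nonNeighbors Δ σ w ⊆ p ∪ q) (hwe : ∀ t ∈ e, (skGraph Δ).Adj w t) :
    w ∈ verts (link Δ (σ \ p)) := by
  obtain ⟨r, hr, hwr⟩ := hblock w hw
  obtain ⟨a, ha⟩ := nonNeighbors_nonempty hF hC hσ hw
  rcases mem_union.1 (hwpq ha) with hap | haq
  · rw [hN.eq_of_mem hr hp (hwr ha) hap] at hwr
    exact (mem_verts_link_sdiff hF hC hσ.1 p).2 ⟨hw, hwr⟩
  · exfalso
    rw [hN.eq_of_mem hr hq (hwr ha) haq] at hwr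
    have hwZ := (mem_verts_link_sdiff hF hC hσ.1 q).2 ⟨hw, hwr⟩
    have heΔ := (mem_link.1 he).1
    have htri : insert w e ∈ link Δ (σ \ q) := by
      rw [hF.link_eq_induced hC (hC.2 σ hσ.1 _ sdiff_subset)]
      refine mem_filter.2 ⟨hF.mem_of_isClique hC (insert_subset hw (subset_verts heΔ)) ?_,
        insert_subset hwZ (subset_verts he)⟩
      rw [coe_insert]
      exact SimpleGraph.isClique_insert.2 ⟨isClique_of_mem hC heΔ, fun t ht _ => hwe t ht⟩
    have := hZ.1.card_le htri
    rw [card_insert_of_notMem fun h => (hwe w h).1 rfl, he2] at this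
    omega

theorem pair_mem_of_mem_verts_link_sdiff (hF : IsFlag Δ) (hNP : IsNormalPseudomanifold Δ σ.card)
    (hσ : IsFacet Δ σ) (hN : IsPairing N σ)
    (hblock : ∀ x ∈ verts Δ, ∃ p ∈ N, nonNeighbors Δ σ x ⊆ p) {p q : Finset V}
    (hp : p ∈ N) (hq : q ∈ N) (hpq : p ≠ q) {x y : V} (hx : x ∈ verts (link Δ (σ \ p)))
    (hy : y ∈ verts (link Δ (σ \ q))) : {x, y} ∈ Δ := by
  have hC := hNP.1.1
  have hface : ∀ r, σ \ r ∈ Δ := fun r => hC.2 σ hσ.1 _ sdiff_subset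
  have hcircle : ∀ r ∈ N, IsCircle (link Δ (σ \ r)) := fun r hr =>
    hNP.isCircle_link (hface r) (hN.card_sdiff_add_two hr)
  obtain ⟨e, he, he2, hye⟩ := (hcircle q hq).exists_edge hy
  obtain ⟨-, heq, heqΔ⟩ := mem_link.1 he
  set η := e ∪ σ \ (p ∪ q)
  have hsub : σ \ (p ∪ q) ⊆ σ \ q := sdiff_subset_sdiff subset_rfl subset_union_right
  have hη : η ∈ Δ := hC.2 _ heqΔ _ (union_subset_union subset_rfl hsub)
  have hηcard : η.card + 2 = σ.card := by
    have hpq4 : (p ∪ q).card = 4 := by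
      rw [card_union_of_disjoint (show Disjoint p q from hN.2.1 hp hq hpq), hN.1 p hp, hN.1 q hq]
    have hpqσ : p ∪ q ⊆ σ := union_subset (hN.subset hp) (hN.subset hq)
    have := card_le_card hpqσ
    rw [card_union_of_disjoint (heq.mono_right hsub), card_sdiff_of_subset hpqσ, hpq4, he2]
    omega
  have hW := hNP.isCircle_link hη hηcard
  have hWp : verts (link Δ η) ⊆ verts (link Δ (σ \ p)) := fun w hw => by
    obtain ⟨hwΔ, hadj⟩ := (hF.mem_verts_link hC hη).1 hw
    refine mem_verts_link_sdiff_of_adj hF hC hσ hN hblock hp hq (hcircle q hq) he he2 hwΔ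
      (fun a ha => ?_) fun t ht => hadj t (mem_union_left _ ht)
    obtain ⟨haσ, hwa⟩ := mem_nonNeighbors.1 ha
    by_contra hapq
    exact hwa (hadj a (mem_union_right _ (mem_sdiff.2 ⟨haσ, hapq⟩)))
  have hWeq : verts (link Δ η) = verts (link Δ (σ \ p)) := by
    refine hW.verts_eq_of_subset (hcircle p hp) ?_
    rw [hF.link_eq_induced hC hη, hF.link_eq_induced hC (hface p)]
    exact fun γ hγ => mem_filter.2 ⟨(mem_filter.1 hγ).1, (mem_filter.1 hγ).2.trans hWp⟩
  exact (((hF.mem_verts_link hC hη).1 (hWeq ▸ hx)).2 y (mem_union_left _ hye)).2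

end Blocks

theorem join_of_circles_criterion_general (m : ℕ) (Δ : Finset (Finset V))
    (hF : IsFlag Δ) (hN : IsNormalPseudomanifold Δ (2 * m)) (σ : Finset V) (hσ : IsFacet Δ σ)
    (hsusp : ∀ τ ⊆ σ, τ.card = 2 * m - 3 → IsSuspensionOfCircle (link Δ τ))
    (hcov : ((σ.powersetCard (2 * m - 2)).biUnion fun δ => verts (link Δ δ)) = verts Δ) :
    IsJoinOfCircles Δ m := by
  have hC : IsComplex Δ := hN.1.1
  have hσm : σ.card = 2 * m := hN.1.2.1 σ hσ
  have hle : ∀ x ∈ verts Δ, (nonNeighbors Δ σ x).card ≤ 2 := fun x hx => by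
    obtain ⟨δ, hδ, hxδ⟩ := mem_biUnion.1 (hcov ▸ hx)
    obtain ⟨hδσ, hδcard⟩ := mem_powersetCard.1 hδ
    have := card_nonNeighbors_add_card_le hF hC hσ.1 hδσ hxδ
    omega
  obtain ⟨N, hNσ, hblock⟩ := exists_isPairing_nonNeighbors_subset hF hC hσ hσm
    (fun τ hτ h => hsusp τ hτ (by omega)) hle
  set e := N.equivFinOfCardEq (by have := hNσ.two_mul_card; omega : N.card = m)
  have hp : ∀ i, (e.symm i : Finset V) ∈ N := fun i => (e.symm i).2
  have hne : ∀ {i j}, i ≠ j → (e.symm i : Finset V) ≠ e.symm j :=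
    fun hij h => hij (e.symm.injective (Subtype.ext h))
  have hlink : (fun i => link Δ (σ \ e.symm i)) =
      fun i => induced Δ (verts (link Δ (σ \ e.symm i))) :=
    funext fun i => hF.link_eq_induced hC (hC.2 σ hσ.1 _ sdiff_subset)
  refine ⟨fun i => link Δ (σ \ e.symm i),
    fun i => hN.isCircle_link (hC.2 σ hσ.1 _ sdiff_subset) (hσm ▸ hNσ.card_sdiff_add_two (hp i)),
    fun i j hij => disjoint_verts_link_sdiff hF hC hσ hNσ (hp i) (hp j) (hne hij), ?_⟩
  rw [hlink]
  refine hF.eq_joinFam_induced hC _ (fun x hx => ?_) fun i j hij u hu v hv =>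
    pair_mem_of_mem_verts_link_sdiff hF (hσm ▸ hN) hσ hNσ hblock (hp i) (hp j) (hne hij) hu hv
  obtain ⟨p, hpN, hxp⟩ := hblock x hx
  refine mem_sup.2 ⟨e ⟨p, hpN⟩, mem_univ _, ?_⟩
  rw [e.symm_apply_apply]
  exact (mem_verts_link_sdiff hF hC hσ.1 p).2 ⟨hx, hxp⟩

/-- Let `m ≥ 2`, let `Δ` be a flag normal
`(2m-1)`-dimensional pseudomanifold and `σ` a facet.  If the link of every
face `τ ⊆ σ` of cardinality `2m - 3` is the suspension of a circle, and
`∪_{δ ⊆ σ, |δ| = 2m-2} V(lk(δ,Δ)) = V(Δ)`, then `Δ` is the join of `m` circles. -/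
theorem join_of_circles_criterion (m : ℕ) (hm : 2 ≤ m) (Δ : Finset (Finset V))
    (hF : IsFlag Δ) (hN : IsNormalPseudomanifold Δ (2 * m)) (n : ℕ)
    (hn : (verts Δ).card = n) (σ : Finset V) (hσ : IsFacet Δ σ)
    (hsusp : ∀ τ ⊆ σ, τ.card = 2 * m - 3 → IsSuspensionOfCircle (link Δ τ))
    (hcov : ((σ.powersetCard (2 * m - 2)).biUnion fun δ => verts (link Δ δ)) = verts Δ) :
    IsJoinOfCircles Δ m :=
  join_of_circles_criterion_general m Δ hF hN σ hσ hsusp hcov
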